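/- If φ₁ ∧ ... ∧ φₙ ⊨ ψ where the φᵢ have pairwise disjoint signatures, then there exist formulas χ₁, ..., χₙ such that φᵢ ⊨ χᵢ for each i, sig(χᵢ) ⊆ sig(φᵢ) ∩ sig(ψ) for each i, and χ₁ ∧ ... ∧ χₙ ⊨ ψ. -/

import Mathlib

inductive PropForm : Type where
  | var : ℕ → PropForm
  | tru : PropForm
  | fls : PropForm
  | neg : PropForm → PropForm
  | conj : PropForm → PropForm → PropForm
  | disj : PropForm → PropForm → PropForm
deriving DecidableEq

namespace PropForm

def eval (v : ℕ → Bool) : PropForm → Bool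
  | var p => v p
  | tru => true
  | fls => false
  | neg φ => !(eval v φ)
  | conj φ ψ => eval v φ && eval v ψ
  | disj φ ψ => eval v φ || eval v ψ

def sig : PropForm → Finset ℕ
  | var p => {p}
  | tru => ∅
  | fls => ∅
  | neg φ => sig φ
  | conj φ ψ => sig φ ∪ sig ψ
  | disj φ ψ => sig φ ∪ sig ψ

def impl (φ ψ : PropForm) : PropForm := disj (neg φ) ψ

def iff (φ ψ : PropForm) : PropForm := conj (impl φ ψ) (impl ψ φ)

end PropForm

/-- Semantic entailment: every model of `φ` is a model of `ψ`. -/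
def Entails (φ ψ : PropForm) : Prop :=
  ∀ v : ℕ → Bool, φ.eval v = true → ψ.eval v = true

/-- Conjunction of a list of formulas. -/
def bigConj (l : List PropForm) : PropForm := l.foldr PropForm.conj PropForm.tru

/-!
Take `χᵢ` to be the strongest consequence of `φᵢ` over the shared variables
`sig φᵢ ∩ sig ψ`, i.e. a formula defining `∃ (other variables), φᵢ`; such a formula exists
because every Boolean function of finitely many variables is definable (Shannon expansion).
If `v` satisfies every `χᵢ`, then each `φᵢ` has a model agreeing with `v` on the shared
variables. The signatures of the `φᵢ` are disjoint, so these models glue into one valuation `w`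
that satisfies every `φᵢ` and agrees with `v` on `sig ψ`; hence `w`, and therefore `v`,
satisfies `ψ`.
-/

open Function in
theorem Pairwise.exists_eqOn_of_disjoint {ι α β : Type*} {s : ι → Set α}
    (hs : Pairwise (Disjoint on s)) (f : ι → α → β) (g : α → β) :
    ∃ h : α → β, (∀ i, Set.EqOn h (f i) (s i)) ∧ Set.EqOn h g (⋃ i, s i)ᶜ := by
  classical
  refine ⟨fun x => if hx : ∃ i, x ∈ s i then f hx.choose x else g x, fun i x hx => ?_,
    fun x hx => dif_neg (by simpa using hx)⟩
  have hex : ∃ j, x ∈ s j := ⟨i, hx⟩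
  have hchoose : hex.choose = i := by
    by_contra hne
    exact Set.disjoint_left.1 (hs hne) hex.choose_spec hx
  simp only [dif_pos hex, hchoose]

namespace PropForm

theorem dependsOn_eval (φ : PropForm) : DependsOn φ.eval ↑φ.sig := by
  intro v w h
  induction φ with
  | var p => exact h p (Finset.mem_singleton_self p)
  | tru | fls => rfl
  | neg φ ih => simp only [eval, ih h]
  | conj φ ψ ih₁ ih₂ | disj φ ψ ih₁ ih₂ =>
    simp only [sig, Finset.coe_union, Set.mem_union] at h
    simp only [eval, ih₁ fun x hx => h x (.inl hx), ih₂ fun x hx => h x (.inr hx)]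

theorem exists_sig_subset_eval_eq {f : (ℕ → Bool) → Bool} (S : Finset ℕ)
    (hf : DependsOn f ↑S) : ∃ χ : PropForm, χ.sig ⊆ S ∧ ∀ v, χ.eval v = f v := by
  induction S using Finset.induction_on generalizing f with
  | empty =>
    refine ⟨if f (fun _ => false) then tru else fls, by split <;> simp [sig], fun v => ?_⟩
    rw [Finset.coe_empty] at hf
    rw [hf.empty v fun _ => false]
    split <;> simp_all [eval]
  | insert a S _ ih =>
    have hfix : ∀ b, DependsOn (fun v => f (Function.update v a b)) ↑S := fun b v w hvw =>
      hf fun x hx => by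
        rcases eq_or_ne x a with rfl | hxa
        · simp
        · simp [hxa, hvw x (by simpa [hxa] using hx)]
    obtain ⟨χ₁, hsig₁, heval₁⟩ := ih (hfix true)
    obtain ⟨χ₀, hsig₀, heval₀⟩ := ih (hfix false)
    refine ⟨disj (conj (var a) χ₁) (conj (neg (var a)) χ₀), ?_, fun v => ?_⟩
    · simp only [sig, Finset.union_subset_iff, Finset.singleton_subset_iff]
      exact ⟨⟨Finset.mem_insert_self a S, hsig₁.trans (Finset.subset_insert a S)⟩,
        Finset.mem_insert_self a S, hsig₀.trans (Finset.subset_insert a S)⟩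
    · conv_rhs => rw [← Function.update_eq_self a v]
      cases hv : v a <;> simp [eval, heval₁, heval₀, hv]

theorem exists_projection (φ : PropForm) (S : Finset ℕ) :
    ∃ χ : PropForm, χ.sig ⊆ S ∧
      ∀ v, χ.eval v = true ↔ ∃ w, (∀ x ∈ S, w x = v x) ∧ φ.eval w = true := by
  classical
  have hdep : DependsOn (fun v => decide (∃ w, (∀ x ∈ S, w x = v x) ∧ φ.eval w = true)) ↑S :=
    fun v v' hvv' => decide_eq_decide.2 <| exists_congr fun w => and_congr_left fun _ =>
      forall₂_congr fun x hx => by rw [hvv' x hx]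
  obtain ⟨χ, hsig, heval⟩ := exists_sig_subset_eval_eq S hdep
  exact ⟨χ, hsig, fun v => by simp [heval]⟩

end PropForm

theorem eval_bigConj (l : List PropForm) (v : ℕ → Bool) :
    (bigConj l).eval v = true ↔ ∀ φ ∈ l, φ.eval v = true := by
  induction l with
  | nil => simp [bigConj, PropForm.eval]
  | cons φ l ih => simp_all [bigConj, PropForm.eval]

theorem eval_bigConj_ofFn {n : ℕ} (φs : Fin n → PropForm) (v : ℕ → Bool) :
    (bigConj (List.ofFn φs)).eval v = true ↔ ∀ i, (φs i).eval v = true := by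
  rw [eval_bigConj, List.forall_mem_ofFn_iff]

/-- Parallel interpolation: for formulas with pairwise disjoint signatures whose
conjunction entails `ψ`, there are parallel interpolants. -/
theorem parallel_interpolation (n : ℕ) (φs : Fin n → PropForm) (ψ : PropForm)
    (hdisj : ∀ i j : Fin n, i ≠ j → (φs i).sig ∩ (φs j).sig = ∅)
    (h : Entails (bigConj (List.ofFn φs)) ψ) :
    ∃ χs : Fin n → PropForm,
      (∀ i, Entails (φs i) (χs i)) ∧
      (∀ i, (χs i).sig ⊆ (φs i).sig ∩ ψ.sig) ∧
      Entails (bigConj (List.ofFn χs)) ψ := by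
  choose χs hsig hχs using fun i => (φs i).exists_projection ((φs i).sig ∩ ψ.sig)
  refine ⟨χs, fun i v hv => (hχs i v).2 ⟨v, fun _ _ => rfl, hv⟩, hsig, fun v hv => ?_⟩
  choose ws hws_v hws_φ using fun i => (hχs i v).1 ((eval_bigConj_ofFn χs v).1 hv i)
  have hdisj' : Pairwise (Function.onFun Disjoint fun i => ((φs i).sig : Set ℕ)) :=
    fun i j hij => Finset.disjoint_coe.2 (Finset.disjoint_iff_inter_eq_empty.2 (hdisj i j hij))
  obtain ⟨w, hw_ws, hw_v⟩ := hdisj'.exists_eqOn_of_disjoint ws v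
  have hw_φ : ∀ i, (φs i).eval w = true := fun i =>
    ((φs i).dependsOn_eval (hw_ws i)).trans (hws_φ i)
  have hw_ψ : ∀ x ∈ ψ.sig, w x = v x := fun x hx => by
    by_cases hx' : ∃ i, x ∈ (φs i).sig
    · obtain ⟨i, hi⟩ := hx'
      rw [hw_ws i hi, hws_v i x (Finset.mem_inter.2 ⟨hi, hx⟩)]
    · exact hw_v (by simpa using hx')
  exact (ψ.dependsOn_eval hw_ψ).symm.trans (h w ((eval_bigConj_ofFn φs w).2 hw_φ))
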